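/- arXiv:2605.22713 — 2 statements merged into one kernel-verified Lean document; each statement's English description precedes it below -/
import Mathlib

section
/- Let M ⊆ B(H) be a von Neumann algebra and let (R, T, ψ) be a bipartite exact embezzlement protocol for α in (M, M', H). Then for every X ∈ M, Y ∈ M', and all i, j ∈ Fin d: (R i j)* (Y ψ) = (if j = 0 then (1 / α i) • (Y (T i 0) ψ) else 0) and (T i j)* (X ψ) = (if j = 0 then (1 / α i) • (X (R i 0) ψ) else 0). -/
/-! Let `x_k ∈ ℓ²(Fin d; H)` carry `T k 0 ψ` in slot `0` and vanish elsewhere. The protocol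
says that `R x_k` carries `α k • ψ` in slot `k`, so contractivity of `R` gives
`α k ≤ ‖T k 0 ψ‖`, while contractivity of `T` at `ψ` in slot `0` gives
`∑ ‖T k 0 ψ‖² ≤ 1 = ∑ (α k)²`. Hence `‖T k 0 ψ‖ = α k`: `R` is isometric at `x_k`, so its
adjoint maps `R x_k` back to `x_k`, and the components of this identity are the values
`(R k j)* ψ`. Since `(R k j)* ∈ M` commutes with `Y ∈ M'`, this extends to `Y ψ`; the bicommutant
theorem makes `(M', T, R)` a protocol as well, which gives the statement about `T`. -/

open scoped InnerProductSpace
open ContinuousLinearMap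

/-- The block operator on `ℓ²(Fin d; H)` associated with a `d × d` matrix of operators on `H`,
acting by `(R x) i = ∑ j, (R i j) (x j)`. -/
noncomputable def blockOp {H : Type*} [NormedAddCommGroup H] [InnerProductSpace ℂ H] {d : ℕ}
    (R : Fin d → Fin d → H →L[ℂ] H) :
    (PiLp 2 fun _ : Fin d => H) →L[ℂ] (PiLp 2 fun _ : Fin d => H) :=
  (((PiLp.continuousLinearEquiv 2 ℂ (fun _ : Fin d => H)).symm :
      (∀ _ : Fin d, H) →L[ℂ] (PiLp 2 fun _ : Fin d => H))) ∘L
    (ContinuousLinearMap.pi fun i => ∑ j, (R i j) ∘L (ContinuousLinearMap.proj j)) ∘L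
    (((PiLp.continuousLinearEquiv 2 ℂ (fun _ : Fin d => H)) :
      (PiLp 2 fun _ : Fin d => H) →L[ℂ] (∀ _ : Fin d, H)))

variable {H : Type*} [NormedAddCommGroup H] [InnerProductSpace ℂ H] [CompleteSpace H]

/-- `R` is a contraction in `M_d ⊗ M`: all blocks lie in `M` and the block operator on
`ℓ²(Fin d; H)` has operator norm at most `1`. -/
def IsContractionIn (M : VonNeumannAlgebra H) {d : ℕ}
    (R : Fin d → Fin d → H →L[ℂ] H) : Prop :=
  (∀ i j, R i j ∈ M) ∧ ‖blockOp R‖ ≤ 1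

/-- A bipartite exact embezzlement protocol for `α` in `(M, M', H)`: `R` is a contraction in
`M_d ⊗ M`, `T` is a contraction with blocks in the commutant `M'`, `ψ` is a unit vector, and
`(R i 0)(T j 0) ψ = δ_{ij} α i • ψ` for all `i, j`. -/
def BipartiteProtocol (M : VonNeumannAlgebra H) {d : ℕ} [NeZero d] (α : Fin d → ℝ)
    (R T : Fin d → Fin d → H →L[ℂ] H) (ψ : H) : Prop :=
  IsContractionIn M R ∧ IsContractionIn M.commutant T ∧ ‖ψ‖ = 1 ∧
    ∀ i j, (R i 0) ((T j 0) ψ) = (if i = j then (α i : ℂ) else 0) • ψ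

/-- A monopartite exact embezzlement protocol for `α` in `(M, H)`: `R` is a contraction in
`M_d ⊗ M`, `ψ` is a unit vector, and `⟨(R i 0)* X (R j 0) ψ, ψ⟩ = δ_{ij} (α i)² ⟨X ψ, ψ⟩`
for all `X ∈ M` and all `i, j`. -/
def MonopartiteProtocol (M : VonNeumannAlgebra H) {d : ℕ} [NeZero d] (α : Fin d → ℝ)
    (R : Fin d → Fin d → H →L[ℂ] H) (ψ : H) : Prop :=
  IsContractionIn M R ∧ ‖ψ‖ = 1 ∧
    ∀ X ∈ M, ∀ i j : Fin d,
      ⟪(adjoint (R i 0)) (X ((R j 0) ψ)), ψ⟫_ℂ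
        = (if i = j then ((α i : ℂ)) ^ 2 else 0) * ⟪X ψ, ψ⟫_ℂ

/-- The orthogonal projection of `H` onto the closure of `{Y ψ : Y ∈ S}`, as an operator
on `H`. -/
noncomputable def suppProjOn (S : Set (H →L[ℂ] H)) (ψ : H) : H →L[ℂ] H :=
  letI K := (Submodule.span ℂ ((fun Y : H →L[ℂ] H => Y ψ) '' S)).topologicalClosure
  K.subtypeL ∘L (K.orthogonalProjection : H →L[ℂ] K)

/-- The support projection of the state `⟨· ψ, ψ⟩` on `M`: the orthogonal projection onto
the closure of `M' ψ`. -/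
noncomputable def suppP (M : VonNeumannAlgebra H) (ψ : H) : H →L[ℂ] H :=
  suppProjOn (M.commutant : Set (H →L[ℂ] H)) ψ

/-- The support projection of the state `⟨· ψ, ψ⟩` on `M'`: the orthogonal projection onto
the closure of `M ψ`. -/
noncomputable def suppP' (M : VonNeumannAlgebra H) (ψ : H) : H →L[ℂ] H :=
  suppProjOn (M : Set (H →L[ℂ] H)) ψ

section BlockOperators

variable {E : Type*} [NormedAddCommGroup E] [InnerProductSpace ℂ E] {d : ℕ}

lemma blockOp_apply (R : Fin d → Fin d → E →L[ℂ] E) (x : PiLp 2 fun _ : Fin d => E)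
    (i : Fin d) : blockOp R x i = ∑ j, R i j (x j) := by
  simp [blockOp]

lemma blockOp_single (R : Fin d → Fin d → E →L[ℂ] E) (j : Fin d) (v : E) :
    blockOp R (PiLp.single 2 j v) = WithLp.toLp 2 fun i => R i j v := by
  ext i
  rw [blockOp_apply, Finset.sum_eq_single j] <;> simp +contextual

lemma adjoint_blockOp [CompleteSpace E] (R : Fin d → Fin d → E →L[ℂ] E) :
    adjoint (blockOp R) = blockOp fun i j => adjoint (R j i) := by
  refine ((eq_adjoint_iff _ _).2 fun x y => ?_).symm
  simp only [PiLp.inner_apply, blockOp_apply, sum_inner, inner_sum, adjoint_inner_left]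
  exact Finset.sum_comm

lemma adjoint_blockOp_single_apply [CompleteSpace E] (R : Fin d → Fin d → E →L[ℂ] E)
    (i j : Fin d) (v : E) : adjoint (blockOp R) (PiLp.single 2 i v) j = adjoint (R i j) v := by
  rw [adjoint_blockOp, blockOp_single, PiLp.toLp_apply]

end BlockOperators

lemma ContinuousLinearMap.adjoint_apply_apply_of_norm_apply_eq {E : Type*}
    [NormedAddCommGroup E] [InnerProductSpace ℂ E] [CompleteSpace E] {A : E →L[ℂ] E}
    (hA : ‖A‖ ≤ 1) {x : E} (hx : ‖A x‖ = ‖x‖) : adjoint A (A x) = x := by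
  have hle : ‖adjoint A (A x)‖ ≤ ‖x‖ :=
    calc ‖adjoint A (A x)‖ ≤ ‖adjoint A‖ * ‖A x‖ := le_opNorm _ _
      _ ≤ 1 * ‖x‖ := by rw [adjoint.norm_map, hx]; gcongr
      _ = ‖x‖ := one_mul _
  have hre : RCLike.re ⟪adjoint A (A x), x⟫_ℂ = ‖x‖ ^ 2 := by
    rw [adjoint_inner_left, inner_self_eq_norm_sq, hx]
  have hsq : ‖adjoint A (A x) - x‖ ^ 2 ≤ 0 := by
    rw [@norm_sub_sq ℂ, hre]
    nlinarith [norm_nonneg (adjoint A (A x))]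
  rw [← sub_eq_zero, ← norm_eq_zero]
  exact pow_eq_zero_iff two_ne_zero |>.1 (le_antisymm hsq (sq_nonneg _))

lemma eq_of_le_of_sum_sq_le {ι : Type*} [Fintype ι] {a b : ι → ℝ} (ha : ∀ i, 0 ≤ a i)
    (hab : ∀ i, a i ≤ b i) (hsum : ∑ i, b i ^ 2 ≤ ∑ i, a i ^ 2) : b = a := by
  have hsq : ∀ i ∈ Finset.univ, a i ^ 2 ≤ b i ^ 2 := fun i _ => pow_le_pow_left₀ (ha i) (hab i) 2
  have heq := (Finset.sum_eq_sum_iff_of_le hsq).1 (le_antisymm (Finset.sum_le_sum hsq) hsum)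
  funext i
  exact (pow_left_inj₀ ((ha i).trans (hab i)) (ha i) two_ne_zero).1
    (heq i (Finset.mem_univ i)).symm

section ContractionPair

variable {E : Type*} [NormedAddCommGroup E] [InnerProductSpace ℂ E] {d : ℕ}
  {α : Fin d → ℝ} {A B : Fin d → Fin d → E →L[ℂ] E} {c : Fin d} {ψ : E}

lemma blockOp_single_column_apply
    (hAB : ∀ i j, A i c (B j c ψ) = (if i = j then (α i : ℂ) else 0) • ψ) (k : Fin d) :
    blockOp A (PiLp.single 2 c (B k c ψ)) = (α k : ℂ) • PiLp.single 2 k ψ := by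
  ext i
  rw [blockOp_single, PiLp.toLp_apply, hAB, PiLp.smul_apply]
  by_cases h : i = k <;> simp [h]

lemma norm_apply_column_eq [CompleteSpace E] (hα : ∀ i, 0 < α i) (hsum : ∑ i, α i ^ 2 = 1)
    (hψ : ‖ψ‖ = 1) (hA : ‖blockOp A‖ ≤ 1) (hB : ‖blockOp B‖ ≤ 1)
    (hAB : ∀ i j, A i c (B j c ψ) = (if i = j then (α i : ℂ) else 0) • ψ) (k : Fin d) :
    ‖B k c ψ‖ = α k := by
  have hlow : ∀ k, α k ≤ ‖B k c ψ‖ := fun k => by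
    have h := (blockOp A).le_of_opNorm_le hA (PiLp.single 2 c (B k c ψ))
    rwa [blockOp_single_column_apply hAB, norm_smul, PiLp.norm_single, PiLp.norm_single, hψ,
      mul_one, one_mul, Complex.norm_real, Real.norm_of_nonneg (hα k).le] at h
  have hupp : ∑ k, ‖B k c ψ‖ ^ 2 ≤ ∑ k, α k ^ 2 := by
    have h := (blockOp B).le_of_opNorm_le hB (PiLp.single 2 c ψ)
    rw [PiLp.norm_single, hψ, one_mul] at h
    calc ∑ k, ‖B k c ψ‖ ^ 2 = ‖blockOp B (PiLp.single 2 c ψ)‖ ^ 2 := by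
          rw [blockOp_single, PiLp.norm_sq_eq_of_L2]
      _ ≤ ∑ k, α k ^ 2 := hsum ▸ pow_le_one₀ (norm_nonneg _) h
  exact congrFun (eq_of_le_of_sum_sq_le (fun i => (hα i).le) hlow hupp) k

theorem adjoint_apply_of_column_mul_column [CompleteSpace E] (hα : ∀ i, 0 < α i)
    (hsum : ∑ i, α i ^ 2 = 1) (hψ : ‖ψ‖ = 1) (hA : ‖blockOp A‖ ≤ 1) (hB : ‖blockOp B‖ ≤ 1)
    (hAB : ∀ i j, A i c (B j c ψ) = (if i = j then (α i : ℂ) else 0) • ψ) (k j : Fin d) :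
    adjoint (A k j) ψ = if j = c then ((1 / α k : ℝ) : ℂ) • B k c ψ else 0 := by
  have hiso : ‖blockOp A (PiLp.single 2 c (B k c ψ))‖
      = ‖(PiLp.single 2 c (B k c ψ) : PiLp 2 fun _ : Fin d => E)‖ := by
    rw [blockOp_single_column_apply hAB, norm_smul, PiLp.norm_single, PiLp.norm_single, hψ,
      norm_apply_column_eq hα hsum hψ hA hB hAB, Complex.norm_real, Real.norm_of_nonneg (hα k).le,
      mul_one]
  have hinv := congrFun (congrArg WithLp.ofLp
    (adjoint_apply_apply_of_norm_apply_eq hA hiso)) j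
  rw [blockOp_single_column_apply hAB, map_smul] at hinv
  simp only [WithLp.ofLp_smul, Pi.smul_apply] at hinv
  rw [← adjoint_blockOp_single_apply, eq_inv_smul_iff₀ (by exact_mod_cast (hα k).ne') |>.2 hinv]
  by_cases h : j = c <;> simp [h]

end ContractionPair

namespace BipartiteProtocol

variable {M : VonNeumannAlgebra H} {d : ℕ} [NeZero d] {α : Fin d → ℝ}
  {R T : Fin d → Fin d → H →L[ℂ] H} {ψ : H}

theorem symm (h : BipartiteProtocol M α R T ψ) : BipartiteProtocol M.commutant α T R ψ := by
  obtain ⟨hR, hT, hψ, hRT⟩ := h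
  refine ⟨hT, M.commutant_commutant.symm ▸ hR, hψ, fun i j => ?_⟩
  have hcomm : R j 0 * T i 0 = T i 0 * R j 0 :=
    VonNeumannAlgebra.mem_commutant_iff.1 (hT.1 i 0) _ (hR.1 j 0)
  rw [show T i 0 (R j 0 ψ) = R j 0 (T i 0 ψ) from (DFunLike.congr_fun hcomm ψ).symm, hRT]
  by_cases hij : i = j
  · subst hij; rfl
  · simp [hij, Ne.symm hij]

theorem adjoint_apply_commutant (h : BipartiteProtocol M α R T ψ) (hα : ∀ i, 0 < α i)
    (hsum : ∑ i, α i ^ 2 = 1) {Y : H →L[ℂ] H} (hY : Y ∈ M.commutant) (i j : Fin d) :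
    adjoint (R i j) (Y ψ) = if j = 0 then ((1 / α i : ℝ) : ℂ) • Y (T i 0 ψ) else 0 := by
  obtain ⟨hR, hT, hψ, hRT⟩ := h
  have hcomm : adjoint (R i j) * Y = Y * adjoint (R i j) := by
    rw [← star_eq_adjoint]
    exact VonNeumannAlgebra.mem_commutant_iff.1 hY _ (star_mem (hR.1 i j))
  rw [show adjoint (R i j) (Y ψ) = Y (adjoint (R i j) ψ) from DFunLike.congr_fun hcomm ψ,
    adjoint_apply_of_column_mul_column hα hsum hψ hR.2 hT.2 hRT]
  split_ifs <;> simp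

end BipartiteProtocol

theorem blocks_determined_on_subspace_general
    {H : Type*} [NormedAddCommGroup H] [InnerProductSpace ℂ H] [CompleteSpace H]
    (M : VonNeumannAlgebra H) {d : ℕ} [NeZero d]
    (α : Fin d → ℝ) (hα : ∀ i, 0 < α i) (hsum : ∑ i, (α i) ^ 2 = 1)
    (R T : Fin d → Fin d → H →L[ℂ] H) (ψ : H)
    (hproto : BipartiteProtocol M α R T ψ) :
    ∀ X ∈ M, ∀ Y ∈ M.commutant, ∀ i j : Fin d,
      (adjoint (R i j)) (Y ψ)
          = (if j = 0 then ((1 / α i : ℝ) : ℂ) • (Y ((T i 0) ψ)) else 0) ∧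
        (adjoint (T i j)) (X ψ)
          = (if j = 0 then ((1 / α i : ℝ) : ℂ) • (X ((R i 0) ψ)) else 0) :=
  fun _ hX _ hY i j =>
    ⟨hproto.adjoint_apply_commutant hα hsum hY i j,
      hproto.symm.adjoint_apply_commutant hα hsum (M.commutant_commutant.symm ▸ hX) i j⟩

/-- If `(R, T, ψ)` is a bipartite exact embezzlement protocol for `α`, then for all `X ∈ M`,
`Y ∈ M'` and all `i, j`: `(R i j)* (Y ψ) = δ_{j0} (1/α i) • Y (T i 0) ψ` and
`(T i j)* (X ψ) = δ_{j0} (1/α i) • X (R i 0) ψ`. -/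
theorem blocks_determined_on_subspace
    {H : Type*} [NormedAddCommGroup H] [InnerProductSpace ℂ H] [CompleteSpace H]
    (M : VonNeumannAlgebra H) {d : ℕ} [NeZero d] (hd : 2 ≤ d)
    (α : Fin d → ℝ) (hα : ∀ i, 0 < α i) (hsum : ∑ i, (α i) ^ 2 = 1)
    (R T : Fin d → Fin d → H →L[ℂ] H) (ψ : H)
    (hproto : BipartiteProtocol M α R T ψ) :
    ∀ X ∈ M, ∀ Y ∈ M.commutant, ∀ i j : Fin d,
      (adjoint (R i j)) (Y ψ)
          = (if j = 0 then ((1 / α i : ℝ) : ℂ) • (Y ((T i 0) ψ)) else 0) ∧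
        (adjoint (T i j)) (X ψ)
          = (if j = 0 then ((1 / α i : ℝ) : ℂ) • (X ((R i 0) ψ)) else 0) :=
  blocks_determined_on_subspace_general M α hα hsum R T ψ hproto
end

section
/- Let M ⊆ B(H) be a von Neumann algebra and let (R, ψ) be a monopartite exact embezzlement protocol for α in (M, H). Set V j = (R j 0)* for j ∈ Fin d. Let t ∈ ℝ and suppose u ∈ M is a unitary such that u (V j) u* = exp(−2 i t · log(α j)) • (V j) for every j ∈ Fin d (i.e., u V_j u* = (α j)^{−2it} V_j, using the complex exponential). If ⟨u ψ, ψ⟩ ≠ 0, then for every j ∈ Fin d, exp(2 i t · log(α j)) = 1; equivalently, t · log(α j) ∈ π ℤ for every j (i.e., t belongs to the subgroup H_φ = ⋂_j H_{α_j} of (ℝ, +), where H_{α_j} is the cyclic subgroup generated by −π / log(α j)). -/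
open scoped InnerProductSpace
open ContinuousLinearMap

variable {H : Type*} [NormedAddCommGroup H] [InnerProductSpace ℂ H] [CompleteSpace H]

/-!
The column `x ↦ (R j 0 x)_j` is a contraction `H → ℓ²(Fin d; H)` which, by the protocol identity
with `X = 1`, preserves the norm of `ψ`; hence it preserves inner products against `ψ`. The
conjugation hypothesis says `R j 0 u = c_j u R j 0` with `c_j = exp (-2it log α_j)` unimodular,
and the protocol identity with `X = u` then gives `⟪u ψ, ψ⟫ = (∑ j, α_j² conj c_j) ⟪u ψ, ψ⟫`.
Cancelling `⟪u ψ, ψ⟫ ≠ 0` writes `1` as a convex combination with positive weights of the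
unimodular numbers `conj c_j`, so each of them is `1`.
-/

section Contraction

variable {𝕜 E F : Type*} [RCLike 𝕜]
  [NormedAddCommGroup E] [InnerProductSpace 𝕜 E] [CompleteSpace E]
  [NormedAddCommGroup F] [InnerProductSpace 𝕜 F] [CompleteSpace F]

theorem ContinuousLinearMap.adjoint_apply_apply_eq_of_norm_apply_eq {A : E →L[𝕜] F}
    (hA : ‖A‖ ≤ 1) {ψ : E} (hψ : ‖A ψ‖ = ‖ψ‖) : adjoint A (A ψ) = ψ := by
  have hre : RCLike.re ⟪adjoint A (A ψ), ψ⟫_𝕜 = ‖ψ‖ ^ 2 := by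
    rw [adjoint_inner_left, ← hψ, inner_self_eq_norm_sq]
  have hle : ‖adjoint A (A ψ)‖ ≤ ‖ψ‖ :=
    calc ‖adjoint A (A ψ)‖ ≤ ‖adjoint A‖ * ‖A ψ‖ := le_opNorm _ _
      _ ≤ 1 * ‖ψ‖ := by
        rw [LinearIsometryEquiv.norm_map, hψ]
        exact mul_le_mul_of_nonneg_right hA (norm_nonneg ψ)
      _ = ‖ψ‖ := one_mul _
  have hsq : ‖adjoint A (A ψ) - ψ‖ ^ 2 ≤ 0 := by
    rw [@norm_sub_sq 𝕜, hre]
    nlinarith [hle, norm_nonneg (adjoint A (A ψ)), norm_nonneg ψ]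
  exact sub_eq_zero.mp (norm_eq_zero.mp (by nlinarith [norm_nonneg (adjoint A (A ψ) - ψ)]))

theorem ContinuousLinearMap.inner_apply_apply_eq_of_norm_apply_eq {A : E →L[𝕜] F}
    (hA : ‖A‖ ≤ 1) {ψ : E} (hψ : ‖A ψ‖ = ‖ψ‖) (x : E) : ⟪A x, A ψ⟫_𝕜 = ⟪x, ψ⟫_𝕜 := by
  rw [← adjoint_inner_right, A.adjoint_apply_apply_eq_of_norm_apply_eq hA hψ]

end Contraction

theorem star_mul_eq_smul_mul_star_of_mul_mul_star_eq_smul {𝕜 A : Type*} [CommRing 𝕜] [StarRing 𝕜]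
    [Ring A] [StarRing A] [Algebra 𝕜 A] [StarModule 𝕜 A] {u a : A} (hu : u ∈ unitary A)
    {c : 𝕜} (hc : c ∈ unitary 𝕜) (h : u * a * star u = c • a) :
    star a * u = c • (u * star a) := by
  have hstar : u * star a * star u = star c • star a := by
    simpa [star_smul, mul_assoc] using congrArg star h
  have hu_star_a : u * star a = star c • (star a * u) := by
    simpa [mul_assoc, Unitary.star_mul_self_of_mem hu, smul_mul_assoc] using
      congrArg (· * u) hstar
  rw [hu_star_a, smul_smul, Unitary.mul_star_self_of_mem hc, one_smul]

section Column

variable {E : Type*} [NormedAddCommGroup E] [InnerProductSpace ℂ E] {d : ℕ}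

noncomputable def columnOp (R : Fin d → Fin d → E →L[ℂ] E) (k : Fin d) :
    E →L[ℂ] PiLp 2 fun _ : Fin d => E :=
  blockOp R ∘L ((PiLp.continuousLinearEquiv 2 ℂ (fun _ : Fin d => E)).symm :
      (∀ _ : Fin d, E) →L[ℂ] (PiLp 2 fun _ : Fin d => E)) ∘L
    ContinuousLinearMap.single ℂ (fun _ : Fin d => E) k

theorem columnOp_apply (R : Fin d → Fin d → E →L[ℂ] E) (k : Fin d) (x : E) (i : Fin d) :
    columnOp R k x i = R i k x := by
  simp [columnOp, blockOp, apply_ite]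

theorem norm_columnOp_le (R : Fin d → Fin d → E →L[ℂ] E) (k : Fin d) :
    ‖columnOp R k‖ ≤ ‖blockOp R‖ := by
  refine ContinuousLinearMap.opNorm_le_bound _ (norm_nonneg (blockOp R)) fun x => ?_
  have hsingle : ‖((PiLp.continuousLinearEquiv 2 ℂ (fun _ : Fin d => E)).symm :
      (∀ _ : Fin d, E) →L[ℂ] (PiLp 2 fun _ : Fin d => E))
        (ContinuousLinearMap.single ℂ (fun _ : Fin d => E) k x)‖ = ‖x‖ := by
    simp only [ContinuousLinearEquiv.coe_coe, PiLp.continuousLinearEquiv_symm_apply,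
      ContinuousLinearMap.single_apply, PiLp.toLp_single, PiLp.norm_single]
  exact hsingle ▸ (blockOp R).le_opNorm _

theorem inner_columnOp (R : Fin d → Fin d → E →L[ℂ] E) (k : Fin d) (x y : E) :
    ⟪columnOp R k x, columnOp R k y⟫_ℂ = ∑ i, ⟪R i k x, R i k y⟫_ℂ := by
  simp only [PiLp.inner_apply, columnOp_apply]

end Column

theorem Complex.eq_one_of_sum_smul_eq_one {ι : Type*} [Fintype ι] {w : ι → ℝ} (hw : ∀ i, 0 < w i)
    (hw_sum : ∑ i, w i = 1) {z : ι → ℂ} (hz : ∀ i, ‖z i‖ ≤ 1) (h : ∑ i, w i • z i = 1) (i : ι) :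
    z i = 1 := by
  have hre_le : ∀ j, (z j).re ≤ 1 := fun j => (Complex.re_le_norm _).trans (hz j)
  have hdefect : ∑ j, w j * (1 - (z j).re) = 0 := by
    have hre : ∑ j, w j * (z j).re = 1 := by
      simpa [Complex.re_sum] using congrArg Complex.re h
    simp only [mul_sub, mul_one, Finset.sum_sub_distrib, hw_sum, hre, sub_self]
  have hre : (z i).re = 1 := by
    have := (Finset.sum_eq_zero_iff_of_nonneg fun j _ =>
      mul_nonneg (hw j).le (sub_nonneg.mpr (hre_le j))).mp hdefect i (Finset.mem_univ i)
    nlinarith [hw i]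
  have him : (z i).im = 0 := by
    have := hz i
    rw [← sq_le_one_iff₀ (norm_nonneg _), Complex.sq_norm, Complex.normSq_apply, hre] at this
    nlinarith
  exact Complex.ext hre him

namespace MonopartiteProtocol

variable {M : VonNeumannAlgebra H} {d : ℕ} [NeZero d] {α : Fin d → ℝ}
  {R : Fin d → Fin d → H →L[ℂ] H} {ψ : H}

theorem inner_apply_apply_eq_sq_mul (hp : MonopartiteProtocol M α R ψ) {X : H →L[ℂ] H} (hX : X ∈ M)
    (j : Fin d) : ⟪X (R j 0 ψ), R j 0 ψ⟫_ℂ = (α j : ℂ) ^ 2 * ⟪X ψ, ψ⟫_ℂ := by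
  simpa [adjoint_inner_left] using hp.2.2 X hX j j

theorem sum_inner_apply_eq_inner (hp : MonopartiteProtocol M α R ψ) (hsum : ∑ i, α i ^ 2 = 1)
    (x : H) : ∑ j, ⟪R j 0 x, R j 0 ψ⟫_ℂ = ⟪x, ψ⟫_ℂ := by
  have hinner : ⟪columnOp R 0 ψ, columnOp R 0 ψ⟫_ℂ = ⟪ψ, ψ⟫_ℂ := by
    have hself := hp.inner_apply_apply_eq_sq_mul (one_mem M)
    simp only [one_apply_eq_self] at hself
    rw [inner_columnOp, Finset.sum_congr rfl fun j _ => hself j, ← Finset.sum_mul]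
    exact_mod_cast congrArg (fun s : ℝ => (s : ℂ) * ⟪ψ, ψ⟫_ℂ) hsum |>.trans (one_mul _)
  have hnorm : ‖columnOp R 0 ψ‖ = ‖ψ‖ := by
    rw [inner_self_eq_norm_sq_to_K, inner_self_eq_norm_sq_to_K] at hinner
    exact (pow_left_inj₀ (norm_nonneg _) (norm_nonneg _) two_ne_zero).mp (by exact_mod_cast hinner)
  rw [← inner_columnOp]
  exact (columnOp R 0).inner_apply_apply_eq_of_norm_apply_eq
    ((norm_columnOp_le R 0).trans hp.1.2) hnorm x

end MonopartiteProtocol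

theorem inner_implementation_forces_subgroup_general
    {H : Type*} [NormedAddCommGroup H] [InnerProductSpace ℂ H] [CompleteSpace H]
    (M : VonNeumannAlgebra H) {d : ℕ} [NeZero d]
    (α : Fin d → ℝ) (hα : ∀ i, 0 < α i) (hsum : ∑ i, (α i) ^ 2 = 1)
    (R : Fin d → Fin d → H →L[ℂ] H) (ψ : H)
    (hproto : MonopartiteProtocol M α R ψ)
    (t : ℝ) (u : H →L[ℂ] H) (hu_mem : u ∈ M)
    (hu : u ∈ unitary (H →L[ℂ] H))
    (hconj : ∀ j : Fin d,
      u * (adjoint (R j 0)) * (star u)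
        = Complex.exp (-(2 * Complex.I * (t : ℂ) * (Real.log (α j) : ℂ))) • adjoint (R j 0))
    (hne : ⟪u ψ, ψ⟫_ℂ ≠ 0) :
    ∀ j : Fin d, Complex.exp (2 * Complex.I * (t : ℂ) * (Real.log (α j) : ℂ)) = 1 := by
  set c : Fin d → ℂ := fun j => Complex.exp (-(2 * Complex.I * (t : ℂ) * (Real.log (α j) : ℂ)))
  have hstar : ∀ j, star (c j) = Complex.exp (2 * Complex.I * (t : ℂ) * (Real.log (α j) : ℂ)) := by
    intro j
    simp only [c, Complex.star_def, ← Complex.exp_conj, map_neg, map_mul, Complex.conj_I,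
      Complex.conj_ofReal, map_ofNat]
    ring_nf
  have hc : ∀ j, c j ∈ unitary ℂ := fun j => by
    rw [Unitary.mem_iff_star_mul_self, hstar, ← Complex.exp_add, add_neg_cancel, Complex.exp_zero]
  have hcomm : ∀ j x, R j 0 (u x) = c j • u (R j 0 x) := fun j x => by
    simpa [star_eq_adjoint] using
      congrArg (· x) (star_mul_eq_smul_mul_star_of_mul_mul_star_eq_smul hu (hc j) (hconj j))
  have hphase : ∑ j, α j ^ 2 • star (c j) = 1 := by
    refine mul_right_cancel₀ hne ?_
    calc (∑ j, α j ^ 2 • star (c j)) * ⟪u ψ, ψ⟫_ℂ = ∑ j, ⟪R j 0 (u ψ), R j 0 ψ⟫_ℂ := by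
          rw [Finset.sum_mul]
          refine Finset.sum_congr rfl fun j _ => ?_
          rw [hcomm, inner_smul_left, hproto.inner_apply_apply_eq_sq_mul hu_mem, Complex.real_smul,
            ← Complex.star_def]
          push_cast
          ring
      _ = 1 * ⟪u ψ, ψ⟫_ℂ := by rw [hproto.sum_inner_apply_eq_inner hsum, one_mul]
  intro j
  rw [← hstar]
  exact Complex.eq_one_of_sum_smul_eq_one (fun i => pow_pos (hα i) 2) hsum
    (fun i => (CStarRing.norm_of_mem_unitary (Unitary.star_mem (hc i))).le) hphase j

/-- If `(R, ψ)` is a monopartite exact embezzlement protocol for `α`, `V j = (R j 0)*`, and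
`u ∈ M` is a unitary with `u V_j u* = (α j)^{-2it} V_j` for all `j`, then `⟨u ψ, ψ⟩ ≠ 0`
implies `exp(2 i t log(α j)) = 1` for every `j` (i.e. `t ∈ H_φ`). -/
theorem inner_implementation_forces_subgroup
    {H : Type*} [NormedAddCommGroup H] [InnerProductSpace ℂ H] [CompleteSpace H]
    (M : VonNeumannAlgebra H) {d : ℕ} [NeZero d] (hd : 2 ≤ d)
    (α : Fin d → ℝ) (hα : ∀ i, 0 < α i) (hsum : ∑ i, (α i) ^ 2 = 1)
    (R : Fin d → Fin d → H →L[ℂ] H) (ψ : H)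
    (hproto : MonopartiteProtocol M α R ψ)
    (t : ℝ) (u : H →L[ℂ] H) (hu_mem : u ∈ M)
    (hu : u ∈ unitary (H →L[ℂ] H))
    (hconj : ∀ j : Fin d,
      u * (adjoint (R j 0)) * (star u)
        = Complex.exp (-(2 * Complex.I * (t : ℂ) * (Real.log (α j) : ℂ))) • adjoint (R j 0))
    (hne : ⟪u ψ, ψ⟫_ℂ ≠ 0) :
    ∀ j : Fin d, Complex.exp (2 * Complex.I * (t : ℂ) * (Real.log (α j) : ℂ)) = 1 :=
  inner_implementation_forces_subgroup_general M α hα hsum R ψ hproto t u hu_mem hu hconj hne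
end
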